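/- T₄ is a test set for L₄. That is, for any alphabet Γ and any two monoid homomorphisms f, g from Σ₄* to Γ* (i.e., string homomorphisms), if f(w) = g(w) for every word w ∈ T₄, then f(w) = g(w) for every word w ∈ L₄. -/

import Mathlib

/-- The 16-letter alphabet Σ₄ = {aᵢ, āᵢ, bᵢ, b̄ᵢ | i ∈ {1,2,3,4}} (indices as `Fin 4`). -/
inductive Sigma4 where
  | a (i : Fin 4)
  | abar (i : Fin 4)
  | b (i : Fin 4)
  | bbar (i : Fin 4)
deriving DecidableEq

/-- The letter `xᵢ`: `aᵢ` if the choice is `true`, `bᵢ` if it is `false`. -/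
def xLetter (c : Bool) (i : Fin 4) : Sigma4 := if c then Sigma4.a i else Sigma4.b i

/-- The letter `x̄ᵢ`: `āᵢ` if the choice is `true`, `b̄ᵢ` if it is `false`. -/
def xbarLetter (c : Bool) (i : Fin 4) : Sigma4 := if c then Sigma4.abar i else Sigma4.bbar i

/-- The word `x₄ x₃ x₂ x₁ x̄₁ x̄₂ x̄₃ x̄₄` determined by the choice function `c`. -/
def word4 (c : Fin 4 → Bool) : List Sigma4 :=
  [xLetter (c 3) 3, xLetter (c 2) 2, xLetter (c 1) 1, xLetter (c 0) 0,
   xbarLetter (c 0) 0, xbarLetter (c 1) 1, xbarLetter (c 2) 2, xbarLetter (c 3) 3]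

/-- The language L₄ of the 16 words `x₄x₃x₂x₁x̄₁x̄₂x̄₃x̄₄`. -/
def L4 : Set (List Sigma4) := { w | ∃ c : Fin 4 → Bool, w = word4 c }

/-- T₄ = L₄ minus the all-`b` word `b₄b₃b₂b₁b̄₁b̄₂b̄₃b̄₄`. -/
def T4 : Set (List Sigma4) := L4 \ {word4 (fun _ => false)}

/-!
The free monoid embeds in the free group, where commuting with a fixed non-trivial element is
transitive: by Nielsen–Schreier the centralizer of such an element is free, and a free group with
non-trivial centre has at most one generator, so it is abelian.

Peel off the outer letters, writing `p`, `q` for the images of the inner word under the two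
homomorphisms. Once they agree on `a₄ · ā₄`, they agree on `b₄ · b̄₄` iff `r p s = p` for some
`r, s` independent of the inner word; and given one solution `p'`, `p` is a solution iff `r`
commutes with `p p'⁻¹`. For inner words `u x₁ x̄₁ ū` the quotient of the two choices of `x₁` is
`u δ u⁻¹` for a fixed `δ`. Commutative transitivity carries "`r` commutes with `u δ u⁻¹`" from
`u = b₃a₂, a₃a₂, a₃b₂` to `(b₃a₂)(a₃a₂)⁻¹(a₃b₂) = b₃b₂`, which gives the missing word.
-/

def IsCommTransitive (G : Type*) [Group G] : Prop :=
  ∀ ⦃r x y : G⦄, r ≠ 1 → Commute r x → Commute r y → Commute x y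

namespace FreeGroup

variable {α : Type*}

theorem toWord_freeMonoidLift_of [DecidableEq α] (w : FreeMonoid α) :
    (FreeMonoid.lift of w).toWord = w.toList.map (·, true) := by
  have hmk : ∀ l : List α, (l.map of).prod = mk (l.map (·, true)) := by
    intro l
    induction l with
    | nil => rfl
    | cons a l ih => rw [List.map_cons, List.prod_cons, ih]; rfl
  have hred : IsReduced (w.toList.map (·, true)) :=
    (List.isChain_map _).2 (List.isChain_iff_getElem.2 fun _ _ _ => rfl)
  rw [FreeMonoid.lift_apply, hmk, toWord_mk, hred.reduce_eq]

theorem injective_freeMonoidLift_of :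
    Function.Injective (FreeMonoid.lift (of : α → FreeGroup α)) := fun x y h => by
  classical
  have := congrArg toWord h
  rw [toWord_freeMonoidLift_of, toWord_freeMonoidLift_of] at this
  exact FreeMonoid.toList.injective
    (List.map_injective_iff.2 (fun _ _ h => congrArg Prod.fst h) this)

theorem commute_of_subsingleton [Subsingleton α] (x y : FreeGroup α) : Commute x y := by
  induction x using FreeGroup.induction_on with
  | C1 => exact .one_left y
  | of a =>
    induction y using FreeGroup.induction_on with
    | C1 => exact .one_right _
    | of b => rw [Subsingleton.elim a b]
    | inv_of b h => exact h.inv_right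
    | mul y₁ y₂ h₁ h₂ => exact h₁.mul_right h₂
  | inv_of a h => exact h.inv_left
  | mul x₁ x₂ h₁ h₂ => exact h₁.mul_left h₂

/-- Conjugating the reduced word of `z` by a letter `d` different from its first letter, with the
sign chosen against its last letter, makes the reduced word two letters longer. -/
theorem subsingleton_of_mem_center [DecidableEq α] {z : FreeGroup α}
    (hz : z ∈ Subgroup.center _) (h1 : z ≠ 1) : Subsingleton α := by
  refine ⟨fun a b => by_contra fun hab => ?_⟩
  obtain ⟨hd, tl, hw⟩ : ∃ hd tl, z.toWord = hd :: tl :=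
    List.exists_cons_of_ne_nil (by rwa [Ne, toWord_eq_nil_iff])
  obtain ⟨e, he⟩ : ∃ e, z.toWord.getLast? = some e := Option.ne_none_iff_exists'.1 (by simp [hw])
  set d := if hd.1 = a then b else a
  have hd_ne : d ≠ hd.1 := by grind
  set x := mk [(d, e.2)]
  have hconj : x⁻¹ * z * x = mk ((d, !e.2) :: (z.toWord ++ [(d, e.2)])) := by
    conv_lhs => rw [← mk_toWord (x := z)]
    rw [inv_mk, mul_mk, mul_mk]
    rfl
  have hred : IsReduced ((d, !e.2) :: (z.toWord ++ [(d, e.2)])) := by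
    rw [IsReduced, List.isChain_cons, List.isChain_append]
    exact ⟨by simp [hw, hd_ne], isReduced_toWord, List.isChain_singleton _, by simp [he]⟩
  have hfix : x⁻¹ * z * x = z := by
    rw [mul_assoc, ← Subgroup.mem_center_iff.1 hz x, inv_mul_cancel_left]
  have := congrArg (List.length ∘ toWord) (hconj.symm.trans hfix)
  simp [toWord_mk, hred.reduce_eq] at this
  omega

end FreeGroup

namespace IsFreeGroup

variable {G : Type*} [Group G] [IsFreeGroup G]

theorem commute_of_mem_center {z : G} (hz : z ∈ Subgroup.center G) (h1 : z ≠ 1) (x y : G) :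
    Commute x y := by
  classical
  let e := toFreeGroup G
  have : Subsingleton (Generators G) := by
    refine FreeGroup.subsingleton_of_mem_center (z := e z) ?_ (by simpa using h1)
    refine Subgroup.mem_center_iff.2 fun g => ?_
    simpa using congrArg e (Subgroup.mem_center_iff.1 hz (e.symm g))
  simpa using (FreeGroup.commute_of_subsingleton (e x) (e y)).map e.symm

theorem isCommTransitive : IsCommTransitive G := by
  intro r x y hr hx hy
  let C := Subgroup.centralizer {r}
  have mem : ∀ {g}, Commute r g → g ∈ C := fun hg =>
    Subgroup.mem_centralizer_singleton_iff.2 hg.eq.symm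
  have hcenter : (⟨r, mem (.refl r)⟩ : C) ∈ Subgroup.center C :=
    Subgroup.mem_center_iff.2 fun g => Subtype.ext (Subgroup.mem_centralizer_singleton_iff.1 g.2)
  exact (commute_of_mem_center hcenter (by simpa using hr) ⟨x, mem hx⟩ ⟨y, mem hy⟩).map C.subtype

end IsFreeGroup

section Group

variable {G : Type*} [Group G]

theorem exists_forall_mul_mul_eq_iff (a₁ a₂ b₁ b₂ c₁ c₂ d₁ d₂ : G) :
    ∃ r s : G, ∀ p q : G, a₁ * p * b₁ = a₂ * q * b₂ →
      (c₁ * p * d₁ = c₂ * q * d₂ ↔ r * p * s = p) := by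
  refine ⟨c₁⁻¹ * c₂ * a₂⁻¹ * a₁, b₁ * b₂⁻¹ * d₂ * d₁⁻¹, fun p q h => ?_⟩
  obtain rfl : q = a₂⁻¹ * (a₁ * p * b₁) * b₂⁻¹ := by rw [h]; group
  rw [show c₁⁻¹ * c₂ * a₂⁻¹ * a₁ * p * (b₁ * b₂⁻¹ * d₂ * d₁⁻¹)
      = c₁⁻¹ * (c₂ * (a₂⁻¹ * (a₁ * p * b₁) * b₂⁻¹) * d₂) * d₁⁻¹ by group,
    mul_inv_eq_iff_eq_mul, inv_mul_eq_iff_eq_mul, eq_comm, mul_assoc c₁ p d₁]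

theorem mul_mul_eq_self_iff_commute {r s p p' : G} (h : r * p' * s = p') :
    r * p * s = p ↔ Commute r (p * p'⁻¹) := by
  obtain rfl : s = (r * p')⁻¹ * p' := eq_inv_mul_of_mul_eq h
  rw [commute_iff_eq, show r * p * ((r * p')⁻¹ * p') = r * (p * p'⁻¹) * r⁻¹ * p' by group,
    ← eq_mul_inv_iff_mul_eq, mul_inv_eq_iff_eq_mul]

theorem IsCommTransitive.commute_conj {r δ t u v : G} (hG : IsCommTransitive G)
    (ht : Commute r (t * δ * t⁻¹)) (hu : Commute r (u * δ * u⁻¹)) (hv : Commute r (v * δ * v⁻¹)) :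
    Commute r (t * u⁻¹ * v * δ * (t * u⁻¹ * v)⁻¹) := by
  rcases eq_or_ne r 1 with rfl | hr
  · exact .one_left _
  rcases eq_or_ne δ 1 with rfl | hδ
  · simp
  have huv := (hG hr hu hv).map (MulAut.conj (t * u⁻¹))
  simp only [MulAut.conj_apply] at huv
  refine hG (by rwa [Ne, conj_eq_one_iff]) ht.symm ?_
  convert huv using 1 <;> group

end Group

section Wrap

variable {M : Type*} [Monoid M]

def wrap (φ : FreeMonoid Sigma4 →* M) (i : Fin 4) (c : Bool) (m : M) : M :=
  φ (.of (xLetter c i)) * m * φ (.of (xbarLetter c i))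

theorem map_ofList_word4 (φ : FreeMonoid Sigma4 →* M) (c : Fin 4 → Bool) :
    φ (.ofList (word4 c)) =
      wrap φ 3 (c 3) (wrap φ 2 (c 2) (wrap φ 1 (c 1) (wrap φ 0 (c 0) 1))) := by
  simp [word4, wrap, FreeMonoid.ofList_cons, mul_assoc]

end Wrap

theorem word4_mem_T4 {c : Fin 4 → Bool} (hc : (c 3 || c 2 || c 1 || c 0)) :
    word4 c ∈ T4 := by
  refine ⟨⟨c, rfl⟩, fun h => ?_⟩
  simp [word4, xLetter, xbarLetter] at h
  simp [h] at hc

theorem IsCommTransitive.wrap_false_eq {G : Type*} [Group G] (hG : IsCommTransitive G)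
    (φ ψ : FreeMonoid Sigma4 →* G)
    (h : ∀ c₃ c₂ c₁ c₀ : Bool, (c₃ || c₂ || c₁ || c₀) →
      wrap φ 3 c₃ (wrap φ 2 c₂ (wrap φ 1 c₁ (wrap φ 0 c₀ 1))) =
        wrap ψ 3 c₃ (wrap ψ 2 c₂ (wrap ψ 1 c₁ (wrap ψ 0 c₀ 1)))) :
    wrap φ 3 false (wrap φ 2 false (wrap φ 1 false (wrap φ 0 false 1))) =
      wrap ψ 3 false (wrap ψ 2 false (wrap ψ 1 false (wrap ψ 0 false 1))) := by
  let p c₂ c₁ c₀ := wrap φ 2 c₂ (wrap φ 1 c₁ (wrap φ 0 c₀ 1))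
  let u c₂ c₁ := φ (.of (xLetter c₂ 2)) * φ (.of (xLetter c₁ 1))
  let δ := wrap φ 0 false 1 * (wrap φ 0 true 1)⁻¹
  obtain ⟨r, s, hrs⟩ := exists_forall_mul_mul_eq_iff
    (φ (.of (xLetter true 3))) (ψ (.of (xLetter true 3)))
    (φ (.of (xbarLetter true 3))) (ψ (.of (xbarLetter true 3)))
    (φ (.of (xLetter false 3))) (ψ (.of (xLetter false 3)))
    (φ (.of (xbarLetter false 3))) (ψ (.of (xbarLetter false 3)))
  have hfix : ∀ c₂ c₁ c₀ : Bool, (c₂ || c₁ || c₀) → r * p c₂ c₁ c₀ * s = p c₂ c₁ c₀ :=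
    fun c₂ c₁ c₀ hc => (hrs _ _ (h true c₂ c₁ c₀ rfl)).1 (h false c₂ c₁ c₀ hc)
  have hcomm : ∀ c₂ c₁ : Bool, (c₂ || c₁) → Commute r (u c₂ c₁ * δ * (u c₂ c₁)⁻¹) := by
    intro c₂ c₁ hc
    have := (mul_mul_eq_self_iff_commute (hfix c₂ c₁ true (by simp))).1
      (hfix c₂ c₁ false (by simpa using hc))
    convert this using 1
    simp only [p, u, δ, wrap]
    group
  have hcomm₀ := hG.commute_conj (hcomm false true rfl) (hcomm true true rfl) (hcomm true false rfl)
  have hfix₀ : r * p false false false * s = p false false false := by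
    refine (mul_mul_eq_self_iff_commute (hfix false false true rfl)).2 ?_
    convert hcomm₀ using 1
    simp only [p, u, δ, wrap]
    group
  exact (hrs _ _ (h true false false false rfl)).2 hfix₀

theorem IsCommTransitive.map_eq_of_eqOn_T4 {G : Type*} [Group G] (hG : IsCommTransitive G)
    (φ ψ : FreeMonoid Sigma4 →* G) (h : ∀ w ∈ T4, φ (.ofList w) = ψ (.ofList w)) :
    ∀ w ∈ L4, φ (.ofList w) = ψ (.ofList w) := by
  rintro _ ⟨c, rfl⟩
  by_cases hc : (c 3 || c 2 || c 1 || c 0)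
  · exact h _ (word4_mem_T4 hc)
  obtain ⟨⟨⟨h₃, h₂⟩, h₁⟩, h₀⟩ : ((c 3 = false ∧ c 2 = false) ∧ c 1 = false) ∧ c 0 = false := by
    simpa using hc
  rw [map_ofList_word4, map_ofList_word4, h₃, h₂, h₁, h₀]
  refine hG.wrap_false_eq φ ψ fun c₃ c₂ c₁ c₀ hc => ?_
  have := h _ (word4_mem_T4 (c := ![c₀, c₁, c₂, c₃]) hc)
  rwa [map_ofList_word4, map_ofList_word4] at this

/-- `T₄` is a test set for `L₄`: any two string homomorphisms (monoid homomorphisms between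
free monoids) that agree on every word of `T₄` agree on every word of `L₄`. -/
theorem T4_is_test_set_for_L4 :
    ∀ (Γ : Type) (f g : FreeMonoid Sigma4 →* FreeMonoid Γ),
      (∀ w ∈ T4, f (FreeMonoid.ofList w) = g (FreeMonoid.ofList w)) →
      ∀ w ∈ L4, f (FreeMonoid.ofList w) = g (FreeMonoid.ofList w) := by
  intro Γ f g hT w hw
  let ι := FreeMonoid.lift (FreeGroup.of (α := Γ))
  apply FreeGroup.injective_freeMonoidLift_of
  exact IsFreeGroup.isCommTransitive.map_eq_of_eqOn_T4 (ι.comp f) (ι.comp g)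
    (fun w hw => congrArg ι (hT w hw)) w hw
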